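/- Let f : ℂ → Mat_{m×2}(ℂ) be differentiable with f(0) = 0, set f^♯ := J_m fᵗ J₂ (with J_m, J₂ the anti-diagonal identities), and let g : ℂ → Mat_{m×m}(ℂ) satisfy g' = −f·(f')^♯ with g(0) = 0, where ' denotes the complex derivative. Define the block upper triangular matrix H(z, λ) = [[I_m, λ⁻¹ f(z), λ⁻² g(z)], [0, I₂, −λ⁻¹ f(z)^♯], [0, 0, I_m]] for λ ∈ ℂ\{0}. Then H(0, λ) = I and H satisfies the ODE ∂H/∂z = H · 𝒫(z, λ), where 𝒫(z, λ) = λ⁻¹ [[0, f'(z), 0], [0, 0, −(f'(z))^♯], [0, 0, 0]]. -/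

import Mathlib

/-- The anti-diagonal identity matrix `Jₙ`. -/
def Jmat (n : ℕ) : Matrix (Fin n) (Fin n) ℂ :=
  Matrix.of fun i j => if (i : ℕ) + (j : ℕ) + 1 = n then (1 : ℂ) else 0

/-- For an `m×2` matrix `f`, its sharp `f^♯ = J₂ fᵗ J_m` (a `2×m` matrix). -/
noncomputable def sharp {m : ℕ} (f : Matrix (Fin m) (Fin 2) ℂ) : Matrix (Fin 2) (Fin m) ℂ :=
  Jmat 2 * f.transpose * Jmat m

/-- A `3×3` block matrix with blocks of sizes `m, 2, m`. -/
def block3 {m : ℕ}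
    (A11 : Matrix (Fin m) (Fin m) ℂ) (A12 : Matrix (Fin m) (Fin 2) ℂ)
    (A13 : Matrix (Fin m) (Fin m) ℂ) (A21 : Matrix (Fin 2) (Fin m) ℂ)
    (A22 : Matrix (Fin 2) (Fin 2) ℂ) (A23 : Matrix (Fin 2) (Fin m) ℂ)
    (A31 : Matrix (Fin m) (Fin m) ℂ) (A32 : Matrix (Fin m) (Fin 2) ℂ)
    (A33 : Matrix (Fin m) (Fin m) ℂ) :
    Matrix (Fin m ⊕ (Fin 2 ⊕ Fin m)) (Fin m ⊕ (Fin 2 ⊕ Fin m)) ℂ :=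
  Matrix.fromBlocks A11 (Matrix.fromCols A12 A13)
    (Matrix.fromRows A21 A31) (Matrix.fromBlocks A22 A23 A32 A33)

/-! `H` is unipotent block upper triangular, and only its three off-diagonal blocks depend
on `z`. Their entrywise derivatives `λ⁻¹ f'`, `λ⁻² g' = -λ⁻² f f'^♯` and `-λ⁻¹ f'^♯` are exactly
the blocks of `H 𝒫`: besides the two blocks of `𝒫` itself, the product only picks up the corner
`λ⁻¹ f · (-λ⁻¹ f'^♯)`, which is what the equation for `g'` accounts for. -/

open Matrix

section EntrywiseDeriv

variable {𝕜 : Type*} [NontriviallyNormedField 𝕜] {l m n o : Type*}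

def HasEntrywiseDerivAt (A : 𝕜 → Matrix m n 𝕜) (A' : Matrix m n 𝕜) (z : 𝕜) : Prop :=
  ∀ i j, HasDerivAt (fun w => A w i j) (A' i j) z

namespace HasEntrywiseDerivAt

variable {A : 𝕜 → Matrix m n 𝕜} {A' : Matrix m n 𝕜} {z : 𝕜}

lemma const (A : Matrix m n 𝕜) (z : 𝕜) : HasEntrywiseDerivAt (fun _ => A) 0 z :=
  fun _ _ => hasDerivAt_const z _

lemma const_smul (c : 𝕜) (hA : HasEntrywiseDerivAt A A' z) :
    HasEntrywiseDerivAt (fun w => c • A w) (c • A') z :=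
  fun i j => (hA i j).const_mul c

lemma neg (hA : HasEntrywiseDerivAt A A' z) : HasEntrywiseDerivAt (fun w => -A w) (-A') z :=
  fun i j => (hA i j).neg

lemma transpose (hA : HasEntrywiseDerivAt A A' z) :
    HasEntrywiseDerivAt (fun w => (A w)ᵀ) A'ᵀ z :=
  fun i j => hA j i

lemma const_mul [Fintype m] (M : Matrix l m 𝕜) (hA : HasEntrywiseDerivAt A A' z) :
    HasEntrywiseDerivAt (fun w => M * A w) (M * A') z :=
  fun i j => HasDerivAt.fun_sum fun k _ => (hA k j).const_mul (M i k)

lemma mul_const [Fintype n] (M : Matrix n o 𝕜) (hA : HasEntrywiseDerivAt A A' z) :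
    HasEntrywiseDerivAt (fun w => A w * M) (A' * M) z :=
  fun i j => HasDerivAt.fun_sum fun k _ => (hA i k).mul_const (M k j)

lemma fromCols {n₂ : Type*} {B : 𝕜 → Matrix m n₂ 𝕜} {B' : Matrix m n₂ 𝕜}
    (hA : HasEntrywiseDerivAt A A' z) (hB : HasEntrywiseDerivAt B B' z) :
    HasEntrywiseDerivAt (fun w => (A w).fromCols (B w)) (A'.fromCols B') z := by
  rintro i (j | j)
  exacts [hA i j, hB i j]

lemma fromRows {m₂ : Type*} {B : 𝕜 → Matrix m₂ n 𝕜} {B' : Matrix m₂ n 𝕜}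
    (hA : HasEntrywiseDerivAt A A' z) (hB : HasEntrywiseDerivAt B B' z) :
    HasEntrywiseDerivAt (fun w => (A w).fromRows (B w)) (A'.fromRows B') z := by
  rintro (i | i) j
  exacts [hA i j, hB i j]

lemma fromBlocks {m₂ n₂ : Type*} {B : 𝕜 → Matrix m n₂ 𝕜} {B' : Matrix m n₂ 𝕜}
    {C : 𝕜 → Matrix m₂ n 𝕜} {C' : Matrix m₂ n 𝕜} {D : 𝕜 → Matrix m₂ n₂ 𝕜} {D' : Matrix m₂ n₂ 𝕜}
    (hA : HasEntrywiseDerivAt A A' z) (hB : HasEntrywiseDerivAt B B' z)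
    (hC : HasEntrywiseDerivAt C C' z) (hD : HasEntrywiseDerivAt D D' z) :
    HasEntrywiseDerivAt (fun w => Matrix.fromBlocks (A w) (B w) (C w) (D w))
      (Matrix.fromBlocks A' B' C' D') z := by
  rintro (i | i) (j | j)
  exacts [hA i j, hB i j, hC i j, hD i j]

end HasEntrywiseDerivAt

end EntrywiseDeriv

lemma sharp_zero {m : ℕ} : sharp (0 : Matrix (Fin m) (Fin 2) ℂ) = 0 := by
  simp [sharp]

lemma HasEntrywiseDerivAt.sharp {m : ℕ} {f : ℂ → Matrix (Fin m) (Fin 2) ℂ}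
    {f' : Matrix (Fin m) (Fin 2) ℂ} {z : ℂ} (hf : HasEntrywiseDerivAt f f' z) :
    HasEntrywiseDerivAt (fun w => sharp (f w)) (sharp f') z :=
  (hf.transpose.const_mul (Jmat 2)).mul_const (Jmat m)

section Block3

variable {m : ℕ}

lemma block3_one : block3 (m := m) 1 0 0 0 1 0 0 0 1 = 1 := by
  simp only [block3, fromCols_zero, fromRows_zero, fromBlocks_one]

lemma block3_mul
    (A11 B11 : Matrix (Fin m) (Fin m) ℂ) (A12 B12 : Matrix (Fin m) (Fin 2) ℂ)
    (A13 B13 : Matrix (Fin m) (Fin m) ℂ) (A21 B21 : Matrix (Fin 2) (Fin m) ℂ)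
    (A22 B22 : Matrix (Fin 2) (Fin 2) ℂ) (A23 B23 : Matrix (Fin 2) (Fin m) ℂ)
    (A31 B31 : Matrix (Fin m) (Fin m) ℂ) (A32 B32 : Matrix (Fin m) (Fin 2) ℂ)
    (A33 B33 : Matrix (Fin m) (Fin m) ℂ) :
    block3 A11 A12 A13 A21 A22 A23 A31 A32 A33 * block3 B11 B12 B13 B21 B22 B23 B31 B32 B33 =
    block3 (A11*B11 + A12*B21 + A13*B31) (A11*B12 + A12*B22 + A13*B32) (A11*B13 + A12*B23 + A13*B33)
           (A21*B11 + A22*B21 + A23*B31) (A21*B12 + A22*B22 + A23*B32) (A21*B13 + A22*B23 + A23*B33)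
           (A31*B11 + A32*B21 + A33*B31) (A31*B12 + A32*B22 + A33*B32) (A31*B13 + A32*B23 + A33*B33) := by
  simp only [block3, fromBlocks_multiply, fromCols_mul_fromRows, fromCols_mul_fromBlocks,
    fromBlocks_mul_fromRows, mul_fromCols, fromRows_mul, add_assoc]
  congr 1 <;> ext (i | i) (j | j) <;> simp

lemma block3_smul (c : ℂ)
    (A11 : Matrix (Fin m) (Fin m) ℂ) (A12 : Matrix (Fin m) (Fin 2) ℂ)
    (A13 : Matrix (Fin m) (Fin m) ℂ) (A21 : Matrix (Fin 2) (Fin m) ℂ)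
    (A22 : Matrix (Fin 2) (Fin 2) ℂ) (A23 : Matrix (Fin 2) (Fin m) ℂ)
    (A31 : Matrix (Fin m) (Fin m) ℂ) (A32 : Matrix (Fin m) (Fin 2) ℂ)
    (A33 : Matrix (Fin m) (Fin m) ℂ) :
    c • block3 A11 A12 A13 A21 A22 A23 A31 A32 A33 =
      block3 (c • A11) (c • A12) (c • A13) (c • A21) (c • A22) (c • A23)
        (c • A31) (c • A32) (c • A33) := by
  ext (i | i | i) (j | j | j) <;> simp [block3, fromCols, fromRows_apply_inl, fromRows_apply_inr]

lemma block3_unitriangular_mul_smul (c : ℂ) (F F' : Matrix (Fin m) (Fin 2) ℂ)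
    (G : Matrix (Fin m) (Fin m) ℂ) (S S' : Matrix (Fin 2) (Fin m) ℂ) :
    block3 1 (c • F) (c ^ 2 • G) 0 1 (-(c • S)) 0 0 1 * (c • block3 0 F' 0 0 0 (-S') 0 0 0) =
      block3 0 (c • F') (c ^ 2 • -(F * S')) 0 0 (-(c • S')) 0 0 0 := by
  rw [mul_smul_comm, block3_mul, block3_smul]
  congr 1 <;> simp [smul_smul, sq]

end Block3

theorem stmt3 (m : ℕ)
    (f f' : ℂ → Matrix (Fin m) (Fin 2) ℂ)
    (g : ℂ → Matrix (Fin m) (Fin m) ℂ)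
    (hf : ∀ z i j, HasDerivAt (fun w => f w i j) (f' z i j) z)
    (hf0 : f 0 = 0)
    (hg : ∀ z i j, HasDerivAt (fun w => g w i j) ((-(f z * sharp (f' z))) i j) z)
    (hg0 : g 0 = 0)
    (H : ℂ → ℂ → Matrix (Fin m ⊕ (Fin 2 ⊕ Fin m)) (Fin m ⊕ (Fin 2 ⊕ Fin m)) ℂ)
    (hH : ∀ lam z, H lam z =
      block3 1 (lam⁻¹ • f z) ((lam⁻¹)^2 • g z)
             0 1 (-(lam⁻¹ • sharp (f z)))
             0 0 1)
    (P : ℂ → ℂ → Matrix (Fin m ⊕ (Fin 2 ⊕ Fin m)) (Fin m ⊕ (Fin 2 ⊕ Fin m)) ℂ)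
    (hP : ∀ z lam, P z lam =
      lam⁻¹ • block3 0 (f' z) 0 0 0 (-(sharp (f' z))) 0 0 0) :
    ∀ lam : ℂ, lam ≠ 0 →
      (H lam 0 = 1 ∧
       ∀ z i j, HasDerivAt (fun w => H lam w i j) ((H lam z * P z lam) i j) z) := by
  intro lam _
  have hf : ∀ z, HasEntrywiseDerivAt f (f' z) z := hf
  have hg : ∀ z, HasEntrywiseDerivAt g (-(f z * sharp (f' z))) z := hg
  refine ⟨?_, fun z => ?_⟩
  · rw [hH, hf0, hg0, sharp_zero]
    simp only [smul_zero, neg_zero]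
    exact block3_one
  · rw [hP, hH, block3_unitriangular_mul_smul, show H lam = _ from funext (hH lam)]
    show HasEntrywiseDerivAt _ _ z
    unfold block3
    exact .fromBlocks (.const _ _)
      (.fromCols ((hf z).const_smul _) ((hg z).const_smul _)) (.fromRows (.const _ _) (.const _ _))
      (.fromBlocks (.const _ _) ((hf z).sharp.const_smul _).neg (.const _ _) (.const _ _))
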